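/- For the TASEP case p = 1, q = 0, the Bethe Ansatz amplitude factorizes: A_σ := sgn(σ) ∏_{i<j} f(ξ_{σ(i)}, ξ_{σ(j)}) / ∏_{i<j} f(ξ_i, ξ_j) with f(ξ,ξ') = 1 − ξ equals sgn(σ) ∏_i (1 − ξ_{σ(i)})^{σ(i)−i}. -/

import Mathlib

/-! Both double products collapse to `∏ i, x i ^ (N - 1 - i)`; reindexing the denominator by `σ`
leaves each factor `1 - ξ (σ i)` with exponent `(N - 1 - i) - (N - 1 - σ i) = σ i - i`. -/

open Finset

theorem Fin.prod_prod_Ioi_const {M : Type*} [CommMonoid M] {N : ℕ} (a : Fin N → M) :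
    ∏ i : Fin N, ∏ _j ∈ Ioi i, a i = ∏ i : Fin N, a i ^ (N - 1 - i) := by
  simp only [Finset.prod_const, card_Ioi]

theorem Equiv.Perm.prod_comp_zpow_div_prod_zpow {G ι : Type*} [CommGroupWithZero G] [Fintype ι]
    (σ : Equiv.Perm ι) {a : ι → G} (ha : ∀ i, a i ≠ 0) (w : ι → ℤ) :
    (∏ i, a (σ i) ^ w i) / ∏ i, a i ^ w i = ∏ i, a (σ i) ^ (w i - w (σ i)) := by
  rw [← Equiv.prod_comp σ (fun i => a i ^ w i), ← prod_div_distrib]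
  exact prod_congr rfl fun i _ => (zpow_sub₀ (ha (σ i)) _ _).symm

/-- For TASEP (p = 1, q = 0, so f(ξ,ξ') = 1 − ξ) the Bethe Ansatz amplitude factorizes:
A_σ = sgn(σ) ∏_{i<j} f(ξ_{σ(i)},ξ_{σ(j)}) / ∏_{i<j} f(ξ_i,ξ_j)
    = sgn(σ) ∏_i (1 − ξ_{σ(i)})^{σ(i)−i}. -/
theorem tasep_amplitude_factorization (N : ℕ) (ξ : Fin N → ℂ) (hξ : ∀ i, ξ i ≠ 1)
    (σ : Equiv.Perm (Fin N)) :
    ((Equiv.Perm.sign σ : ℤ) : ℂ) *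
        (∏ i : Fin N, ∏ j ∈ Finset.Ioi i, (1 - ξ (σ i))) /
        ∏ i : Fin N, ∏ j ∈ Finset.Ioi i, (1 - ξ i)
      = ((Equiv.Perm.sign σ : ℤ) : ℂ) *
          ∏ i : Fin N, (1 - ξ (σ i)) ^ (((σ i : ℕ) : ℤ) - ((i : ℕ) : ℤ)) := by
  have ha : ∀ i, (1 : ℂ) - ξ i ≠ 0 := fun i => sub_ne_zero.mpr (hξ i).symm
  have hratio := σ.prod_comp_zpow_div_prod_zpow ha fun i => ((N - 1 - i : ℕ) : ℤ)
  simp only [zpow_natCast] at hratio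
  rw [Fin.prod_prod_Ioi_const (fun i => 1 - ξ (σ i)), Fin.prod_prod_Ioi_const (fun i => 1 - ξ i),
    mul_div_assoc, hratio]
  refine congrArg _ (prod_congr rfl fun i _ => congrArg _ ?_)
  have := (σ i).isLt
  omega
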